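/- arXiv:2307.11001 — 4 statements merged into one kernel-verified Lean document; each statement's English description precedes it below -/
import Mathlib

section
/- Let ι_! : C → D be a functor between categories admitting a right adjoint ι* such that (i) ι_! is faithful, (ii) every unit component η_X : X → ι*ι_!X is a monomorphism, and (iii) for every morphism f : X → Y in C the naturality square of the unit (with sides η_X, η_Y, f, ι*ι_!f) is a pullback square. Then for a morphism g : Y → Z in C and a morphism h : ι_!X → ι_!Y in D, if ι_!(g) ∘ h = ι_!(k) for some k : X → Z in C, then h = ι_!(f) for a unique morphism f : X → Y in C. -/
open CategoryTheory

universe v₁ v₂ u₁ u₂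

/-- Let `ι_! = L : C ⥤ D` be a functor with right adjoint `ι* = R` such that (i) `L` is
faithful, (ii) every unit component is a monomorphism, and (iii) every naturality square
of the unit is a pullback.  Then admissible morphisms (those in the image of `L` on
hom-sets) are left-cancellable: if `g : Y ⟶ Z` lies in `C` and
`h ≫ L.map g = L.map k` for some `k : X ⟶ Z` in `C`, then `h = L.map f` for a unique
`f : X ⟶ Y`. -/
theorem stmt_9 {C : Type u₁} [Category.{v₁} C] {D : Type u₂} [Category.{v₂} D]
    (L : C ⥤ D) (R : D ⥤ C) (adj : L ⊣ R) [L.Faithful]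
    (hmono : ∀ X : C, Mono (adj.unit.app X))
    (hpb : ∀ {X Y : C} (f : X ⟶ Y),
      IsPullback f (adj.unit.app X) (adj.unit.app Y) (R.map (L.map f)))
    {X Y Z : C} (g : Y ⟶ Z) (h : L.obj X ⟶ L.obj Y) (k : X ⟶ Z)
    (hcomp : h ≫ L.map g = L.map k) :
    ∃! f : X ⟶ Y, L.map f = h := by
  -- adjunct of h
  set h' : X ⟶ R.obj (L.obj Y) := adj.unit.app X ≫ R.map h with hh'
  have hcone : h' ≫ R.map (L.map g) = k ≫ adj.unit.app Z := by
    rw [hh', Category.assoc, ← R.map_comp, hcomp]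
    exact (adj.unit.naturality k).symm
  set f : X ⟶ Y := (hpb g).lift k h' hcone.symm with hfdef
  have hf1 : f ≫ g = k := (hpb g).lift_fst k h' hcone.symm
  have hf2 : f ≫ adj.unit.app Y = h' := (hpb g).lift_snd k h' hcone.symm
  have key : L.map f = h := by
    apply (adj.homEquiv X (L.obj Y)).injective
    rw [Adjunction.homEquiv_unit, Adjunction.homEquiv_unit]
    have hnat := adj.unit.naturality f
    simp only [Functor.id_map, Functor.comp_map] at hnat
    rw [← hnat, hf2, hh']
  refine ⟨f, key, fun f' hf' => L.map_injective (hf'.trans key.symm)⟩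
end

section
/- Let T be a category, S ⊆ T a wide subcategory, and suppose S satisfies left-cancellability and contains all isomorphisms. Suppose also there exist morphisms α : A → B and β : B → A in T with β ∘ α = id_A and α ∘ β ∈ S but α ∉ S. Then the left Kan extension functor ι_! : PSh(S) → PSh(T) along the inclusion ι : S ↪ T is not a monomorphism of categories; concretely, the colimit X in PSh(S) of the sequential diagram A →^{αβ} A →^{αβ} ⋯ satisfies ι_! X ≅ ι_!(y(B)) in PSh(T) even though X is not isomorphic to the representable presheaf y(B) in PSh(S). -/
open CategoryTheory CategoryTheory.Limits

universe v u

/-!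
The colimit of the constant sequence `B → B → ⋯` along an idempotent `e` is a splitting of `e`,
and conversely every splitting `B → A → B` of `e` is such a colimit.

Since `β ≫ α` splits through `A` in `T`, and `ι_!` preserves colimits with `ι_! ∘ y ≅ y ∘ ι`,
both `ι_! X` and `ι_!(y A)` are `y A`. If `X ≅ y A` in `PSh(S)`, then `y e` splits through
`y A`, hence by full faithfulness `e = β ≫ α` splits as `r ≫ i` through `A` inside `S`.
Two splittings of one idempotent differ by the isomorphism `α ≫ r`, and left cancellation
applied to `r ∈ S` and `α ≫ r ∈ S` gives `α ∈ S`.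
-/

namespace CategoryTheory

section OfSequence

variable {C : Type*} [Category C]

noncomputable def Functor.ofSequenceCompIso {D : Type*} [Category D] {X : ℕ → C}
    (f : ∀ n, X n ⟶ X (n + 1)) (G : C ⥤ D) :
    Functor.ofSequence f ⋙ G ≅ Functor.ofSequence (fun n => G.map (f n)) where
  hom := NatTrans.ofSequence (fun _ => 𝟙 _) (fun _ => by
    simp only [Functor.comp_map, Functor.ofSequence_map_homOfLE_succ]
    exact (Category.comp_id _).trans (Category.id_comp _).symm)
  inv := NatTrans.ofSequence (fun _ => 𝟙 _) (fun _ => by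
    simp only [Functor.comp_map, Functor.ofSequence_map_homOfLE_succ]
    exact (Category.comp_id _).trans (Category.id_comp _).symm)
  hom_inv_id := by ext; exact Category.comp_id _
  inv_hom_id := by ext; exact Category.comp_id _

variable {A B : C} {e : B ⟶ B}

def Functor.ofSequenceConstCocone (e : B ⟶ B) (p : B ⟶ A) (hp : e ≫ p = p) :
    Cocone (Functor.ofSequence fun _ : ℕ => e) where
  pt := A
  ι := NatTrans.ofSequence (fun _ => p) (fun _ => by
    simp only [Functor.ofSequence_map_homOfLE_succ]
    exact hp.trans (Category.comp_id p).symm)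

/- Stated for a bare family `c`: the legs of a cocone over `Functor.ofSequence` have source
`(Functor.ofSequence _).obj n`, which is `B` only after unfolding, so `rw` cannot reassociate
them directly. -/
lemma idem_comp_eq_of_eq_idem_comp_succ (he : e ≫ e = e) {P : C} {c : ℕ → (B ⟶ P)}
    (hc : ∀ n, c n = e ≫ c (n + 1)) (n : ℕ) : e ≫ c n = c n := by
  rw [hc n, reassoc_of% he]

lemma eq_zero_of_eq_idem_comp_succ (he : e ≫ e = e) {P : C} {c : ℕ → (B ⟶ P)}
    (hc : ∀ n, c n = e ≫ c (n + 1)) (n : ℕ) : c n = c 0 := by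
  induction n with
  | zero => rfl
  | succ n ih => rw [← ih, hc n, idem_comp_eq_of_eq_idem_comp_succ he hc]

lemma Limits.Cocone.ofSequence_ι_app_eq_comp_succ
    (s : Cocone (Functor.ofSequence fun _ : ℕ => e)) (n : ℕ) :
    s.ι.app n = e ≫ s.ι.app (n + 1) := by
  rw [← s.w (homOfLE (Nat.le_add_right n 1)), Functor.ofSequence_map_homOfLE_succ]
  rfl

lemma Limits.Cocone.ofSequence_idem_comp_ι_app (he : e ≫ e = e)
    (s : Cocone (Functor.ofSequence fun _ : ℕ => e)) (n : ℕ) :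
    e ≫ s.ι.app n = s.ι.app n :=
  idem_comp_eq_of_eq_idem_comp_succ he (c := s.ι.app) s.ofSequence_ι_app_eq_comp_succ n

lemma Limits.Cocone.ofSequence_idem_ι_app_eq_zero (he : e ≫ e = e)
    (s : Cocone (Functor.ofSequence fun _ : ℕ => e)) (n : ℕ) :
    s.ι.app n = s.ι.app 0 :=
  eq_zero_of_eq_idem_comp_succ he (c := s.ι.app) s.ofSequence_ι_app_eq_comp_succ n

def Retract.isColimitOfSequence (h : Retract A B) (he : h.r ≫ h.i = e) :
    IsColimit (Functor.ofSequenceConstCocone e h.r (by simp [← he])) where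
  desc s := h.i ≫ s.ι.app 0
  fac s n := by
    have he' : e ≫ e = e := by simp [← he]
    exact ((reassoc_of% he) _).trans
      ((s.ofSequence_idem_comp_ι_app he' 0).trans (s.ofSequence_idem_ι_app_eq_zero he' n).symm)
  uniq s m hm := by
    rw [← hm 0]
    exact (h.retract_assoc m).symm

lemma Limits.IsColimit.exists_retract_of_ofSequence (he : e ≫ e = e)
    {c : Cocone (Functor.ofSequence fun _ : ℕ => e)} (hc : IsColimit c) :
    ∃ h : Retract c.pt B, h.r ≫ h.i = e :=
  ⟨{ i := hc.desc (Functor.ofSequenceConstCocone e e he)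
     r := c.ι.app 0
     retract := hc.hom_ext fun n => (hc.fac_assoc _ n _).trans <|
       (c.ofSequence_idem_comp_ι_app he 0).trans <|
         (c.ofSequence_idem_ι_app_eq_zero he n).symm.trans (Category.comp_id _).symm },
   hc.fac _ 0⟩

end OfSequence

namespace Retract

variable {C D : Type*} [Category C] [Category D]

def preimage {F : C ⥤ D} (hF : F.FullyFaithful) {X Y : C} (h : Retract (F.obj X) (F.obj Y)) :
    Retract X Y where
  i := hF.preimage h.i
  r := hF.preimage h.r
  retract := hF.map_injective (by simp)

lemma isIso_i_comp_r {X X' Y : C} (h : Retract X Y) (h' : Retract X' Y)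
    (hri : h.r ≫ h.i = h'.r ≫ h'.i) : IsIso (h.i ≫ h'.r) :=
  ⟨h'.i ≫ h.r, by simp [← reassoc_of% hri], by simp [reassoc_of% hri]⟩

end Retract

lemma exists_retract_of_colimit_ofSequence_yoneda_iso {C : Type*} [Category.{v} C] {A B : C}
    {e : B ⟶ B} (he : e ≫ e = e)
    (φ : colimit (Functor.ofSequence (fun _ : ℕ => e) ⋙ yoneda) ≅ yoneda.obj A) :
    ∃ h : Retract A B, h.r ≫ h.i = e := by
  have hye : yoneda.map e ≫ yoneda.map e = yoneda.map e := by rw [← yoneda.map_comp, he]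
  obtain ⟨h, hh⟩ := (colimit.isColimit _).exists_retract_of_ofSequence hye
  let ψ := (HasColimit.isoOfNatIso (Functor.ofSequenceCompIso (fun _ => e) yoneda)).symm ≪≫ φ
  let hyA := (Retract.ofIso ψ.symm).trans h
  refine ⟨hyA.preimage Yoneda.fullyFaithful, yoneda.map_injective ?_⟩
  simp [hyA, Retract.preimage, Retract.ofIso, hh]

noncomputable def Presheaf.compYonedaIsoYonedaCompLan {C D : Type u} [SmallCategory C]
    [SmallCategory D] (F : C ⥤ D) : F ⋙ yoneda ≅ yoneda ⋙ F.op.lan :=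
  Functor.isoWhiskerLeft F uliftYonedaIsoYoneda.{u}.symm ≪≫
    Presheaf.compULiftYonedaIsoULiftYonedaCompLan.{u} F ≪≫
    Functor.isoWhiskerRight uliftYonedaIsoYoneda.{u} F.op.lan

noncomputable def Presheaf.lanObjColimitOfSequenceIso {C D : Type u} [SmallCategory C]
    [SmallCategory D] (F : C ⥤ D) {A : D} {B : C} (e : B ⟶ B) (h : Retract A (F.obj B))
    (he : h.r ≫ h.i = F.map e) :
    F.op.lan.obj (colimit (Functor.ofSequence (fun _ : ℕ => e) ⋙ yoneda)) ≅ yoneda.obj A :=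
  have := (F.op.lanAdjunction (Type u)).leftAdjoint_preservesColimits
  calc F.op.lan.obj (colimit (Functor.ofSequence (fun _ => e) ⋙ yoneda))
      ≅ colimit ((Functor.ofSequence (fun _ => e) ⋙ yoneda) ⋙ F.op.lan) :=
        preservesColimitIso F.op.lan _
    _ ≅ colimit (Functor.ofSequence (fun _ => e) ⋙ F ⋙ yoneda) :=
        HasColimit.isoOfNatIso
          (Functor.isoWhiskerLeft _ (Presheaf.compYonedaIsoYonedaCompLan F).symm)
    _ ≅ colimit (Functor.ofSequence fun _ : ℕ => yoneda.map (F.map e)) :=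
        HasColimit.isoOfNatIso (Functor.ofSequenceCompIso _ (F ⋙ yoneda))
    _ ≅ yoneda.obj A :=
        colimit.isoColimitCocone
          ⟨_, (h.map yoneda).isColimitOfSequence (by simp [← he])⟩

end CategoryTheory

/-- Let `S ⊆ T` be a left-cancellable wide subcategory containing all isomorphisms, and
suppose there are `α : A ⟶ B`, `β : B ⟶ A` with `β ∘ α = id_A`, `α ∘ β ∈ S` but
`α ∉ S`.  Then the left Kan extension `ι_! : PSh(S) → PSh(T)` is not a monomorphism of
categories: the colimit `X` in `PSh(S)` of the sequential diagram along the idempotent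
`α ∘ β ∈ S` becomes, after applying `ι_!`, isomorphic to the image under `ι_!` of a
representable presheaf (namely the splitting object `A` of the idempotent, which is the
colimit of this diagram in `T`), even though `X` is not isomorphic to that representable
presheaf in `PSh(S)`. -/
theorem stmt_15 {T : Type u} [SmallCategory T] (S : MorphismProperty T) [S.IsMultiplicative]
    (hiso : ∀ {X Y : T} (f : X ⟶ Y), IsIso f → S f)
    (hcancel : ∀ {X Y Z : T} (f : X ⟶ Y) (g : Y ⟶ Z), S g → S (f ≫ g) → S f)
    {A B : T} (α : A ⟶ B) (β : B ⟶ A) (h1 : α ≫ β = 𝟙 A) (h2 : S (β ≫ α)) (h3 : ¬ S α) :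
    Nonempty
      ((wideSubcategoryInclusion S).op.lan.obj
          (colimit ((Functor.ofSequence (X := fun _ : ℕ => (⟨B⟩ : WideSubcategory S))
            (fun _ => (⟨β ≫ α, h2⟩ : ((⟨B⟩ : WideSubcategory S) ⟶ ⟨B⟩)))) ⋙ yoneda)) ≅
        (wideSubcategoryInclusion S).op.lan.obj
          (yoneda.obj (⟨A⟩ : WideSubcategory S))) ∧
    ¬ Nonempty
      (colimit ((Functor.ofSequence (X := fun _ : ℕ => (⟨B⟩ : WideSubcategory S))
          (fun _ => (⟨β ≫ α, h2⟩ : ((⟨B⟩ : WideSubcategory S) ⟶ ⟨B⟩)))) ⋙ yoneda) ≅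
        yoneda.obj (⟨A⟩ : WideSubcategory S)) := by
  let ι := wideSubcategoryInclusion S
  let e : (⟨B⟩ : WideSubcategory S) ⟶ ⟨B⟩ := ⟨β ≫ α, h2⟩
  let splitting : Retract A B := ⟨α, β, h1⟩
  have he : e ≫ e = e := WideSubcategory.hom_ext S (by simp [e, reassoc_of% h1])
  refine ⟨⟨Presheaf.lanObjColimitOfSequenceIso ι e splitting rfl ≪≫
    (Presheaf.compYonedaIsoYonedaCompLan ι).app ⟨A⟩⟩, fun ⟨φ⟩ => ?_⟩
  obtain ⟨splittingS, hsplittingS⟩ := exists_retract_of_colimit_ofSequence_yoneda_iso he φ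
  have hiso_αr : IsIso (α ≫ splittingS.r.hom) :=
    splitting.isIso_i_comp_r (splittingS.map ι)
      (congrArg InducedWideCategory.Hom.hom hsplittingS).symm
  exact h3 (hcancel α _ splittingS.r.property (hiso _ hiso_αr))
end

section
/- Let ι : S ↪ T be the inclusion of a wide subcategory with S left-cancellable and containing all isomorphisms. Then for every presheaf X on S and every object A of S, the canonical map X(A) → (ι*ι_!X)(A) induced by the unit of the adjunction ι_! ⊣ ι* is injective (a monomorphism); consequently ι_! : PSh(S) → PSh(T) is faithful. -/
/-!
By the pointwise formula, `(ι*ι_!X)(A)` is a colimit over the comma category `A/ι`. Since `S` is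
closed under composition and left-cancellable, a morphism of `A/ι` joins two arrows that are both
in `S` or both outside it. Hence restricting `X` along the arrows in `S` and sending the others
to `none` is a cocone with vertex `Option (X A)`, and it retracts the unit onto `some`, which is
injective. A left adjoint whose unit is monic is faithful.
-/

open CategoryTheory CategoryTheory.Limits Opposite

universe u

namespace CategoryTheory.WideSubcategory

variable {T : Type u} [SmallCategory T] (S : MorphismProperty T) [S.IsMultiplicative]

variable {S} in
def homMk {A B : WideSubcategory S} (f : A.obj ⟶ B.obj) (hf : S f) : A ⟶ B := ⟨f, hf⟩

variable [S.HasOfPostcompProperty S]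

open Classical in
noncomputable def optionCocone (X : (WideSubcategory S)ᵒᵖ ⥤ Type u) (A : WideSubcategory S) :
    Cocone (CostructuredArrow.proj (wideSubcategoryInclusion S).op (op A.obj) ⋙ X) where
  pt := Option (X.obj (op A))
  ι.app g := TypeCat.ofHom fun x =>
    if h : S g.hom.unop then some (X.map (homMk g.hom.unop h).op x) else none
  ι.naturality g₁ g₂ φ := by
    have w : g₂.hom.unop ≫ φ.left.unop.hom = g₁.hom.unop :=
      congrArg Quiver.Hom.unop (CostructuredArrow.w φ)
    have hiff : S g₂.hom.unop ↔ S g₁.hom.unop := by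
      rw [← w]
      exact ⟨fun h => S.comp_mem _ _ h φ.left.unop.property,
        MorphismProperty.HasOfPostcompProperty.of_postcomp _ _ φ.left.unop.property⟩
    refine ConcreteCategory.hom_ext _ _ fun x => ?_
    dsimp
    by_cases h₂ : S g₂.hom.unop
    · have he : φ.left ≫ (homMk g₂.hom.unop h₂).op = (homMk g₁.hom.unop (hiff.1 h₂)).op :=
        Quiver.Hom.unop_inj (hom_ext (P := S) w)
      refine (dif_pos h₂).trans (Eq.trans ?_ (dif_pos (hiff.1 h₂)).symm)
      exact congrArg some
        ((X.map_comp_apply _ _ x).symm.trans (types_congr_hom (congrArg X.map he) x))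
    · refine (dif_neg h₂).trans (Eq.trans ?_ (dif_neg (mt hiff.2 h₂)).symm)
      rfl

lemma optionCocone_ι_app_id (X : (WideSubcategory S)ᵒᵖ ⥤ Type u) (A : WideSubcategory S)
    (x : X.obj (op A)) :
    (optionCocone S X A).ι.app (CostructuredArrow.mk (𝟙 (op A.obj))) x = some x :=
  (dif_pos (S.id_mem A.obj)).trans (congrArg some (X.map_id_apply (op A) x))

lemma lanUnit_app_app_injective (X : (WideSubcategory S)ᵒᵖ ⥤ Type u) (A : WideSubcategory S) :
    Function.Injective (((wideSubcategoryInclusion S).op.lanUnit.app X).app (op A)) := by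
  let L := (wideSubcategoryInclusion S).op
  have retraction : ∀ x, colimit.desc _ (optionCocone S X A)
      ((L.leftKanExtensionObjIsoColimit X (op A.obj)).hom ((L.lanUnit.app X).app (op A) x)) =
        some x := by
    intro x
    have h := L.leftKanExtensionUnit_leftKanExtensionObjIsoColimit_hom X (op A)
    rw [← optionCocone_ι_app_id S X A x, ← colimit.ι_desc (optionCocone S X A)]
    exact types_congr_hom (congrArg (· ≫ colimit.desc _ (optionCocone S X A)) h) x
  intro x y hxy
  exact Option.some_injective _ ((retraction x).symm.trans (hxy ▸ retraction y))

end CategoryTheory.WideSubcategory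

theorem stmt_16_general {T : Type u} [SmallCategory T] (S : MorphismProperty T) [S.IsMultiplicative]
    (hcancel : ∀ {X Y Z : T} (f : X ⟶ Y) (g : Y ⟶ Z), S g → S (f ≫ g) → S f) :
    (∀ (X : (WideSubcategory S)ᵒᵖ ⥤ Type u) (A : WideSubcategory S),
      Function.Injective
        ((((wideSubcategoryInclusion S).op.lanAdjunction (Type u)).unit.app X).app
          (Opposite.op A))) ∧
    Functor.Faithful ((wideSubcategoryInclusion S).op.lan :
      ((WideSubcategory S)ᵒᵖ ⥤ Type u) ⥤ (Tᵒᵖ ⥤ Type u)) := by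
  have : S.HasOfPostcompProperty S := ⟨hcancel⟩
  have unit_injective (X : (WideSubcategory S)ᵒᵖ ⥤ Type u) (A : WideSubcategory S) :
      Function.Injective
        ((((wideSubcategoryInclusion S).op.lanAdjunction (Type u)).unit.app X).app (op A)) := by
    rw [Functor.lanAdjunction_unit]
    exact WideSubcategory.lanUnit_app_app_injective S X A
  refine ⟨unit_injective, ?_⟩
  have (X : (WideSubcategory S)ᵒᵖ ⥤ Type u) :
      Mono (((wideSubcategoryInclusion S).op.lanAdjunction (Type u)).unit.app X) :=
    have (A : (WideSubcategory S)ᵒᵖ) := (mono_iff_injective _).2 (unit_injective X A.unop)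
    NatTrans.mono_of_mono_app _
  exact ((wideSubcategoryInclusion S).op.lanAdjunction (Type u)).faithful_L_of_mono_unit_app

/-- Let `ι : S ↪ T` be the inclusion of a left-cancellable wide subcategory containing
all isomorphisms.  Then every unit component of the adjunction `ι_! ⊣ ι*` between
presheaf categories is injective in each degree; consequently the left Kan extension
`ι_! : PSh(S) → PSh(T)` is faithful. -/
theorem stmt_16 {T : Type u} [SmallCategory T] (S : MorphismProperty T) [S.IsMultiplicative]
    (hiso : ∀ {X Y : T} (f : X ⟶ Y), IsIso f → S f)
    (hcancel : ∀ {X Y Z : T} (f : X ⟶ Y) (g : Y ⟶ Z), S g → S (f ≫ g) → S f) :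
    (∀ (X : (WideSubcategory S)ᵒᵖ ⥤ Type u) (A : WideSubcategory S),
      Function.Injective
        ((((wideSubcategoryInclusion S).op.lanAdjunction (Type u)).unit.app X).app
          (Opposite.op A))) ∧
    Functor.Faithful ((wideSubcategoryInclusion S).op.lan :
      ((WideSubcategory S)ᵒᵖ ⥤ Type u) ⥤ (Tᵒᵖ ⥤ Type u)) :=
  stmt_16_general S hcancel
end

section
/- Let ι : S ↪ T be the inclusion of a wide subcategory with S left-cancellable and containing all isomorphisms. Then for every morphism f : X → Y of presheaves on S, the naturality square of the unit η of the adjunction ι_! ⊣ ι* (with vertical maps η_X : X → ι*ι_!X and η_Y : Y → ι*ι_!Y, horizontal maps f and ι*ι_!f) is a pullback square in PSh(S). -/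
/-!
Evaluate at `A`. The value `(ι_! Z)(ι A)` is the colimit of `Z` over the arrows `A ⟶ B` of `T`.
Composition and left cancellation make membership in `S` constant along the morphisms of this
indexing category, so the arrows lying in `S` form a union of connected components, in which
`𝟙 A` is terminal. Hence `(ι_! Z)(ι A) ≅ Z(A) ⊔ Z'` naturally in `Z` (but not in `A`), with the
unit as the first summand inclusion. We record the splitting as a map
`(ι_! Z)(ι A) → Option (Z A)`; a square of summand inclusions is a pullback of types.
-/

open CategoryTheory CategoryTheory.Limits

universe u

theorem CategoryTheory.Limits.Types.isPullback_of_optionRetractions {X Y X' Y' : Type u}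
    (f : X ⟶ Y) (ηX : X ⟶ X') (ηY : Y ⟶ Y') (g : X' ⟶ Y') (rX : X' → Option X)
    (rY : Y' → Option Y) (w : f ≫ ηY = ηX ≫ g) (hrX : ∀ x, rX (ηX x) = some x)
    (hηX : ∀ ξ x, rX ξ = some x → ηX x = ξ) (hrY : ∀ y, rY (ηY y) = some y)
    (hg : ∀ ξ, rY (g ξ) = (rX ξ).map f) :
    IsPullback f ηX ηY g := by
  refine (Types.isPullback_iff _ _ _ _).2 ⟨w, fun x₁ x₂ ⟨_, h⟩ => ?_, fun y ξ h => ?_⟩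
  · simpa [hrX] using congrArg rX h
  · obtain ⟨x, hx, rfl⟩ := Option.map_eq_some_iff.1 ((hg ξ).symm.trans (h ▸ hrY y))
    exact ⟨x, rfl, hηX ξ x hx⟩

namespace CategoryTheory.Functor

variable {C D : Type*} [Category C] [Category D] (L : C ⥤ D)
  [∀ F : C ⥤ Type u, L.HasPointwiseLeftKanExtension F]

lemma exists_lan_obj_map_lanUnit_app_eq {F : C ⥤ Type u} {d : D} (ξ : (L.lan.obj F).obj d) :
    ∃ (j : CostructuredArrow L d) (x : F.obj j.left),
      (L.lan.obj F).map j.hom ((L.lanUnit.app F).app j.left x) = ξ :=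
  Types.jointly_surjective_of_isColimit (L.isPointwiseLeftKanExtensionLeftKanExtensionUnit F d) ξ

lemma lan_map_app_lan_obj_map_lanUnit_app {F G : C ⥤ Type u} (f : F ⟶ G) {d : D}
    (j : CostructuredArrow L d) (x : F.obj j.left) :
    (L.lan.map f).app d ((L.lan.obj F).map j.hom ((L.lanUnit.app F).app j.left x)) =
      (L.lan.obj G).map j.hom ((L.lanUnit.app G).app j.left (f.app j.left x)) := by
  rw [NatTrans.naturality_apply]
  congr 1
  exact (ConcreteCategory.congr_hom (NatTrans.congr_app (L.lanUnit.naturality f) j.left) x).symm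

end CategoryTheory.Functor

namespace CategoryTheory.WideSubcategory

variable {T : Type u} [SmallCategory T] {S : MorphismProperty T} [S.IsMultiplicative]
  {A : (WideSubcategory S)ᵒᵖ}

def homOfMem (j : CostructuredArrow (wideSubcategoryInclusion S).op
    ((wideSubcategoryInclusion S).op.obj A)) (h : S j.hom.unop) : j.left ⟶ A :=
  Quiver.Hom.op (⟨j.hom.unop, h⟩ : A.unop ⟶ j.left.unop)

lemma left_comp_homOfMem {j j' : CostructuredArrow (wideSubcategoryInclusion S).op
    ((wideSubcategoryInclusion S).op.obj A)} (t : j ⟶ j') (h : S j.hom.unop)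
    (h' : S j'.hom.unop) : t.left ≫ homOfMem j' h' = homOfMem j h :=
  Quiver.Hom.unop_inj (WideSubcategory.hom_ext _ (congrArg Quiver.Hom.unop (CostructuredArrow.w t)))

lemma mem_iff_of_hom (hcancel : ∀ {X Y Z : T} (f : X ⟶ Y) (g : Y ⟶ Z), S g → S (f ≫ g) → S f)
    {j j' : CostructuredArrow (wideSubcategoryInclusion S).op
      ((wideSubcategoryInclusion S).op.obj A)} (t : j ⟶ j') :
    S j.hom.unop ↔ S j'.hom.unop := by
  have hw : j.hom.unop = j'.hom.unop ≫ t.left.unop.hom :=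
    congrArg Quiver.Hom.unop (CostructuredArrow.w t).symm
  rw [hw]
  exact ⟨hcancel _ _ t.left.unop.property, fun h => S.comp_mem _ _ h t.left.unop.property⟩

variable (hcancel : ∀ {X Y Z : T} (f : X ⟶ Y) (g : Y ⟶ Z), S g → S (f ≫ g) → S f)
  (Z : (WideSubcategory S)ᵒᵖ ⥤ Type u)

open Classical in
noncomputable def lanRetractionCocone (A : (WideSubcategory S)ᵒᵖ) :
    Cocone (CostructuredArrow.proj (wideSubcategoryInclusion S).op
      ((wideSubcategoryInclusion S).op.obj A) ⋙ Z) where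
  pt := Option (Z.obj A)
  ι.app j := TypeCat.ofHom fun z => if h : S j.hom.unop then some (Z.map (homOfMem j h) z) else none
  ι.naturality j j' t := by
    refine ConcreteCategory.hom_ext _ _ fun (z : Z.obj j.left) => ?_
    change (if h : S j'.hom.unop then some (Z.map (homOfMem j' h) (Z.map t.left z)) else none) =
      if h : S j.hom.unop then some (Z.map (homOfMem j h) z) else none
    by_cases h : S j.hom.unop
    · have h' := (mem_iff_of_hom hcancel t).1 h
      rw [dif_pos h, dif_pos h', ← left_comp_homOfMem t h h', Functor.map_comp_apply]
    · rw [dif_neg h, dif_neg (mt (mem_iff_of_hom hcancel t).2 h)]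

noncomputable def lanRetraction (A : (WideSubcategory S)ᵒᵖ) :
    ((wideSubcategoryInclusion S).op.lan.obj Z).obj ((wideSubcategoryInclusion S).op.obj A) ⟶
      Option (Z.obj A) :=
  ((wideSubcategoryInclusion S).op.isPointwiseLeftKanExtensionLeftKanExtensionUnit Z _).desc
    (lanRetractionCocone hcancel Z A)

variable {Z}

open Classical in
lemma lanRetraction_lan_obj_map_lanUnit_app (j : CostructuredArrow (wideSubcategoryInclusion S).op
    ((wideSubcategoryInclusion S).op.obj A)) (z : Z.obj j.left) :
    lanRetraction hcancel Z A (((wideSubcategoryInclusion S).op.lan.obj Z).map j.hom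
      (((wideSubcategoryInclusion S).op.lanUnit.app Z).app j.left z)) =
      if h : S j.hom.unop then some (Z.map (homOfMem j h) z) else none :=
  ConcreteCategory.congr_hom
    (((wideSubcategoryInclusion S).op.isPointwiseLeftKanExtensionLeftKanExtensionUnit Z _).fac
      (lanRetractionCocone hcancel Z A) j) z

lemma lanRetraction_lanUnit_app (z : Z.obj A) :
    lanRetraction hcancel Z A (((wideSubcategoryInclusion S).op.lanUnit.app Z).app A z) =
      some z := by
  let j₀ := CostructuredArrow.mk (Y := A) (𝟙 ((wideSubcategoryInclusion S).op.obj A))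
  calc _ = lanRetraction hcancel Z A (((wideSubcategoryInclusion S).op.lan.obj Z).map j₀.hom
        (((wideSubcategoryInclusion S).op.lanUnit.app Z).app j₀.left z)) :=
          congrArg _ (((wideSubcategoryInclusion S).op.lan.obj Z).map_id_apply _ _).symm
    _ = some (Z.map (homOfMem j₀ (S.id_mem _)) z) :=
          (lanRetraction_lan_obj_map_lanUnit_app hcancel j₀ z).trans (dif_pos _)
    _ = some z := congrArg some (Z.map_id_apply A z)

lemma lanUnit_app_eq_of_lanRetraction_eq_some
    {ξ : ((wideSubcategoryInclusion S).op.lan.obj Z).obj ((wideSubcategoryInclusion S).op.obj A)}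
    {z : Z.obj A} (h : lanRetraction hcancel Z A ξ = some z) :
    ((wideSubcategoryInclusion S).op.lanUnit.app Z).app A z = ξ := by
  obtain ⟨j, z', rfl⟩ := (wideSubcategoryInclusion S).op.exists_lan_obj_map_lanUnit_app_eq ξ
  rw [lanRetraction_lan_obj_map_lanUnit_app] at h
  split_ifs at h with hj
  rw [← Option.some.inj h]
  exact NatTrans.naturality_apply ((wideSubcategoryInclusion S).op.lanUnit.app Z) (homOfMem j hj) z'

lemma lanRetraction_lan_map_app {X Y : (WideSubcategory S)ᵒᵖ ⥤ Type u} (f : X ⟶ Y)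
    (ξ : ((wideSubcategoryInclusion S).op.lan.obj X).obj ((wideSubcategoryInclusion S).op.obj A)) :
    lanRetraction hcancel Y A (((wideSubcategoryInclusion S).op.lan.map f).app _ ξ) =
      (lanRetraction hcancel X A ξ).map (f.app A) := by
  obtain ⟨j, x, rfl⟩ := (wideSubcategoryInclusion S).op.exists_lan_obj_map_lanUnit_app_eq ξ
  rw [Functor.lan_map_app_lan_obj_map_lanUnit_app, lanRetraction_lan_obj_map_lanUnit_app,
    lanRetraction_lan_obj_map_lanUnit_app]
  split_ifs <;> simp

end CategoryTheory.WideSubcategory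

theorem stmt_17_general {T : Type u} [SmallCategory T] (S : MorphismProperty T) [S.IsMultiplicative]
    (hcancel : ∀ {X Y Z : T} (f : X ⟶ Y) (g : Y ⟶ Z), S g → S (f ≫ g) → S f)
    {X Y : (WideSubcategory S)ᵒᵖ ⥤ Type u} (f : X ⟶ Y) :
    IsPullback f
      (((wideSubcategoryInclusion S).op.lanAdjunction (Type u)).unit.app X)
      (((wideSubcategoryInclusion S).op.lanAdjunction (Type u)).unit.app Y)
      (((Functor.whiskeringLeft (WideSubcategory S)ᵒᵖ Tᵒᵖ (Type u)).obj
          (wideSubcategoryInclusion S).op).map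
        ((wideSubcategoryInclusion S).op.lan.map f)) := by
  rw [Functor.lanAdjunction_unit]
  exact .of_forall_isPullback_app fun A => Types.isPullback_of_optionRetractions _ _ _ _
    (WideSubcategory.lanRetraction hcancel X A) (WideSubcategory.lanRetraction hcancel Y A)
    (NatTrans.congr_app ((wideSubcategoryInclusion S).op.lanUnit.naturality f) A)
    (WideSubcategory.lanRetraction_lanUnit_app hcancel)
    (fun _ _ => WideSubcategory.lanUnit_app_eq_of_lanRetraction_eq_some hcancel)
    (WideSubcategory.lanRetraction_lanUnit_app hcancel)
    (WideSubcategory.lanRetraction_lan_map_app hcancel f)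

/-- Let `ι : S ↪ T` be the inclusion of a left-cancellable wide subcategory containing
all isomorphisms.  Then for every morphism `f : X ⟶ Y` of presheaves on `S`, the
naturality square of the unit of the adjunction `ι_! ⊣ ι*` is a pullback square in
`PSh(S)`. -/
theorem stmt_17 {T : Type u} [SmallCategory T] (S : MorphismProperty T) [S.IsMultiplicative]
    (hiso : ∀ {X Y : T} (f : X ⟶ Y), IsIso f → S f)
    (hcancel : ∀ {X Y Z : T} (f : X ⟶ Y) (g : Y ⟶ Z), S g → S (f ≫ g) → S f)
    {X Y : (WideSubcategory S)ᵒᵖ ⥤ Type u} (f : X ⟶ Y) :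
    IsPullback f
      (((wideSubcategoryInclusion S).op.lanAdjunction (Type u)).unit.app X)
      (((wideSubcategoryInclusion S).op.lanAdjunction (Type u)).unit.app Y)
      (((Functor.whiskeringLeft (WideSubcategory S)ᵒᵖ Tᵒᵖ (Type u)).obj
          (wideSubcategoryInclusion S).op).map
        ((wideSubcategoryInclusion S).op.lan.map f)) :=
  stmt_17_general S hcancel f
end
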